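/- arXiv:2201.00286 — 3 statements merged into one kernel-verified Lean document; each statement's English description precedes it below -/
import Mathlib

section
/- The supremal controllable sublanguage K↑ of K, defined as the union of all controllable sublanguages of K, is itself a controllable sublanguage of K, and it contains every controllable sublanguage of K. -/
def cl {α : Type*} (L : Set (List α)) : Set (List α) := {u | ∃ v, u ++ v ∈ L}

def catU {α : Type*} (M : Set (List α)) (Su : Set α) : Set (List α) :=
  {w | ∃ u ∈ M, ∃ a ∈ Su, w = u ++ [a]}

/-- `K` is controllable w.r.t. plant `L` and uncontrollable actions `Su`. -/
def Controllable {α : Type*} (Su : Set α) (L K : Set (List α)) : Prop :=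
  catU (cl K) Su ∩ L ⊆ cl K

/-- The supremal controllable sublanguage of `K`. -/
def supC {α : Type*} (Su : Set α) (L K : Set (List α)) : Set (List α) :=
  ⋃₀ {K' | K' ⊆ K ∧ Controllable Su L K'}

lemma mem_cl_sUnion {α : Type*} {S : Set (Set (List α))} {u : List α} :
    u ∈ cl (⋃₀ S) ↔ ∃ K ∈ S, u ∈ cl K := by
  constructor
  · rintro ⟨v, K, hK, huv⟩
    exact ⟨K, hK, v, huv⟩
  · rintro ⟨K, hK, v, huv⟩
    exact ⟨v, K, hK, huv⟩

theorem controllable_sUnion {α : Type*} {Su : Set α} {L : Set (List α)}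
    {S : Set (Set (List α))} (hS : ∀ K ∈ S, Controllable Su L K) :
    Controllable Su L (⋃₀ S) := by
  rintro _ ⟨⟨u, hu, a, ha, rfl⟩, hL⟩
  obtain ⟨K, hK, huK⟩ := mem_cl_sUnion.1 hu
  exact mem_cl_sUnion.2 ⟨K, hK, hS K hK ⟨⟨u, huK, a, ha, rfl⟩, hL⟩⟩

theorem supC_spec_general {α : Type*} (Su : Set α) (L K : Set (List α)) :
    supC Su L K ⊆ K ∧ Controllable Su L (supC Su L K) ∧
      ∀ K', K' ⊆ K → Controllable Su L K' → K' ⊆ supC Su L K :=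
  ⟨Set.sUnion_subset fun _ hK' => hK'.1,
    controllable_sUnion fun _ hK' => hK'.2,
    fun _ hsub hctrl => Set.subset_sUnion_of_mem ⟨hsub, hctrl⟩⟩

/-- `K↑` is a controllable sublanguage of `K` containing every controllable
sublanguage of `K`. -/
theorem supC_spec {α : Type*} (Su : Set α) (L K : Set (List α)) (hL : cl L = L) :
    supC Su L K ⊆ K ∧ Controllable Su L (supC Su L K) ∧
      ∀ K', K' ⊆ K → Controllable Su L K' → K' ⊆ supC Su L K :=
  supC_spec_general Su L K
end

section
/- Existence direction of the controllability theorem: if K ⊆ L(M) is nonempty and satisfies cl(K)·Σ_u ∩ L(M) ⊆ cl(K), then the supervisor S defined by S(w) = { σ ∈ Σ : wσ ∈ cl(K) } ∪ Σ_u achieves L(S/M) = cl(K), where L(S/M) is defined inductively by: ε ∈ L(S/M), and wσ ∈ L(S/M) iff w ∈ L(S/M), wσ ∈ L(M), and σ ∈ S(w). -/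
/-- The closed-loop language `L(S/M)` of supervisor `S` controlling a plant
with generated language `LM`, defined inductively. -/
inductive ClosedLoop {α : Type*} (LM : Set (List α)) (S : List α → Set α) :
    List α → Prop
  | nil : ClosedLoop LM S []
  | snoc {w : List α} {a : α} : ClosedLoop LM S w → (w ++ [a]) ∈ LM →
      a ∈ S w → ClosedLoop LM S (w ++ [a])

/-!
Both inclusions are inductions along a word. A word of the closed loop is built by appending
letters that are either enabled because they stay in `cl K`, or uncontrollable and physically
possible, and controllability keeps the latter inside `cl K`. Conversely, every prefix of a word
of `cl K` lies in `cl K ⊆ L(M)`, and its next letter is enabled by the definition of the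
supervisor.
-/

section Closure

variable {α : Type*}

theorem nil_mem_cl {L : Set (List α)} (hL : L.Nonempty) : [] ∈ cl L :=
  let ⟨u, hu⟩ := hL
  ⟨u, hu⟩

theorem cl_mono {K L : Set (List α)} (h : K ⊆ L) : cl K ⊆ cl L :=
  fun _ ⟨v, hv⟩ => ⟨v, h hv⟩

theorem mem_cl_of_append_mem_cl {L : Set (List α)} {u v : List α} (h : u ++ v ∈ cl L) :
    u ∈ cl L :=
  let ⟨x, hx⟩ := h
  ⟨v ++ x, by rwa [← List.append_assoc]⟩

end Closure

namespace ClosedLoop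

variable {α : Type*} {LM : Set (List α)} {S : List α → Set α}

theorem mem_of_invariant {L : Set (List α)} (hnil : [] ∈ L)
    (hsnoc : ∀ w a, w ∈ L → w ++ [a] ∈ LM → a ∈ S w → w ++ [a] ∈ L)
    {w : List α} (h : ClosedLoop LM S w) : w ∈ L := by
  induction h with
  | nil => exact hnil
  | snoc _ hLM hS ih => exact hsnoc _ _ ih hLM hS

theorem of_mem_of_prefix_closed {L : Set (List α)} (hpre : ∀ w a, w ++ [a] ∈ L → w ∈ L)
    (hLM : L ⊆ LM) (hS : ∀ w a, w ++ [a] ∈ L → a ∈ S w) {w : List α} (hw : w ∈ L) :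
    ClosedLoop LM S w := by
  induction w using List.reverseRecOn with
  | nil => exact nil
  | append_singleton w a ih => exact snoc (ih (hpre w a hw)) (hLM hw) (hS w a hw)

end ClosedLoop

/-- Existence direction of the controllability theorem: the canonical
supervisor achieves `L(S/M) = cl K`. -/
theorem controllability_existence {α : Type*} (Su : Set α)
    (LM K : Set (List α)) (hLM : cl LM = LM) (hKL : K ⊆ LM)
    (hne : K.Nonempty) (hctrl : catU (cl K) Su ∩ LM ⊆ cl K) :
    {w | ClosedLoop LM (fun w => {a | w ++ [a] ∈ cl K} ∪ Su) w} = cl K := by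
  apply Set.Subset.antisymm
  · intro w hw
    refine ClosedLoop.mem_of_invariant (nil_mem_cl hne) ?_ hw
    rintro w a hw hLMw (hK | hSu)
    exacts [hK, hctrl ⟨⟨w, hw, a, hSu, rfl⟩, hLMw⟩]
  · intro w hw
    exact ClosedLoop.of_mem_of_prefix_closed (fun _ _ => mem_cl_of_append_mem_cl)
      ((cl_mono hKL).trans hLM.le) (fun _ _ => Or.inl) hw
end

section
/- Necessity direction of the controllability theorem: if a supervisor S (which always enables all uncontrollable actions) achieves L(S/M) = cl(K) for some K ⊆ Σ*, then cl(K)·Σ_u ∩ L(M) ⊆ cl(K). -/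
theorem controllability_necessity_general {α : Type*} (Su : Set α)
    (LM K : Set (List α)) (S : List α → Set α)
    (hS : ∀ w, Su ⊆ S w)
    (h : {w | ClosedLoop LM S w} = cl K) :
    catU (cl K) Su ∩ LM ⊆ cl K := by
  rintro _ ⟨⟨u, hu, a, ha, rfl⟩, huaLM⟩
  rw [← h] at hu ⊢
  exact ClosedLoop.snoc hu huaLM (hS u ha)

/-- Necessity direction of the controllability theorem: if some supervisor
(always enabling uncontrollable actions) achieves `cl K`, then `K` is
controllable. -/
theorem controllability_necessity {α : Type*} (Su : Set α)
    (LM K : Set (List α)) (S : List α → Set α) (hLM : cl LM = LM)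
    (hS : ∀ w, Su ⊆ S w)
    (h : {w | ClosedLoop LM S w} = cl K) :
    catU (cl K) Su ∩ LM ⊆ cl K :=
  controllability_necessity_general Su LM K S hS h
end
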